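/- For all n ≥ 1 and 1 ≤ k ≤ n, the number of valley-marked Dyck paths of semilength n whose first ascent has length k equals the number of increasing ordered trees with n edges whose leaves taken in preorder are increasing and whose root has exactly k children. -/

import Mathlib

/-- A Dyck path of semilength `n`, encoded as a list of booleans where `true`
is an up-step `U = (1,1)` and `false` is a down-step `D = (1,-1)`: it has `2n`
steps, never goes below the x-axis, and ends on the x-axis. -/
def IsDyckPath (n : ℕ) (p : List Bool) : Prop :=
  p.length = 2 * n ∧
    (∀ i : ℕ, (p.take i).count false ≤ (p.take i).count true) ∧
    p.count false = p.count true

/-- The height of the lattice point reached after the first `j` steps. -/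
def pathHeight (p : List Bool) (j : ℕ) : ℕ :=
  (p.take j).count true - (p.take j).count false

/-- There is a valley (a `D` step immediately followed by a `U` step) at
position `i`; its valley vertex is the point reached after `i+1` steps. -/
def IsValley (p : List Bool) (i : ℕ) : Prop :=
  p[i]? = some false ∧ p[i + 1]? = some true

/-- A valley-marking of the path `p`: for each valley, a choice of one of the
lattice points between the valley vertex and the x-axis inclusive, i.e. an
integer mark `m` with `0 ≤ m ≤` the height of the valley vertex (and, for
bookkeeping, the mark is `0` at non-valley positions). -/
def IsValleyMarking (p : List Bool) (m : ℕ → ℕ) : Prop :=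
  ∀ i : ℕ, (IsValley p i → m i ≤ pathHeight p (i + 1)) ∧
    (¬ IsValley p i → m i = 0)

/-- The length of the first ascent: the initial maximal run of `U` steps. -/
def firstAscentLength (p : List Bool) : ℕ :=
  (p.takeWhile id).length

inductive OTree : Type where
  | node : ℕ → List OTree → OTree

/-- The label of the root of the tree. -/
def OTree.label : OTree → ℕ
  | .node l _ => l

/-- The (ordered) list of subtrees at the root. -/
def OTree.children : OTree → List OTree
  | .node _ ts => ts

/-- Labels of all vertices in preorder. -/
def OTree.preorder : OTree → List ℕ
  | .node l ts => l :: (ts.attach.map (fun t => OTree.preorder t.1)).flatten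
decreasing_by
  have := List.sizeOf_lt_of_mem t.2
  simp only [OTree.node.sizeOf_spec]
  omega

/-- Labels of the leaves, in preorder (walkaround) order. -/
def OTree.leaves : OTree → List ℕ
  | .node l ts =>
      if ts.isEmpty then [l] else (ts.attach.map (fun t => OTree.leaves t.1)).flatten
decreasing_by
  have := List.sizeOf_lt_of_mem t.2
  simp only [OTree.node.sizeOf_spec]
  omega

/-- Each child's label exceeds its parent's label. -/
inductive OTree.Increasing : OTree → Prop where
  | node : ∀ (l : ℕ) (ts : List OTree),
      (∀ t ∈ ts, l < t.label) → (∀ t ∈ ts, t.Increasing) →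
      OTree.Increasing (.node l ts)

/-- An increasing ordered tree of size `n` (i.e. with `n` edges): an ordered
tree with `n+1` vertices labeled `0,1,...,n` (each label used exactly once, as
recorded by the preorder list of labels), rooted at the vertex labeled `0`,
such that each child's label exceeds its parent's label. -/
def IsIncOrdTree (n : ℕ) (t : OTree) : Prop :=
  t.label = 0 ∧ t.preorder.Perm (List.range (n + 1)) ∧ t.Increasing

/-- The labels of the leaves, taken in preorder, are increasing. -/
def HasIncLeaves (t : OTree) : Prop :=
  t.leaves.Pairwise (· < ·)

/-!
Both sides satisfy `X (n+1) (a+1) = X n a + (a+1) · ∑_{j > a} X n j` and agree when `n = 0` or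
`k = 0`. A valley-marked path of semilength `n+1` with first ascent `a+1` starts with `U^(a+1) D`;
deleting this first peak leaves a path of semilength `n` whose first ascent `j` exceeds `a`
exactly when a valley followed the peak, and that valley carries one of `a+1` marks. In an
increasing tree the vertex `1` is a child of the root; contracting it into the root and lowering
all labels by one leaves a tree whose root has `a + #children(1)` children. If `1` is a leaf, the
increasing-leaves condition forces it to be the first child of the root; otherwise it may sit at
any of the `a+1` positions.
-/

namespace List

theorem eq_of_append_cons_eq_append_cons {α : Type*} {p : α → Prop}
    {x₁ x₂ z₁ z₂ : List α} {a₁ a₂ : α} (hx₁ : ∀ y ∈ x₁, ¬ p y) (hx₂ : ∀ y ∈ x₂, ¬ p y)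
    (ha₁ : p a₁) (ha₂ : p a₂) (h : x₁ ++ a₁ :: z₁ = x₂ ++ a₂ :: z₂) :
    x₁ = x₂ ∧ a₁ = a₂ ∧ z₁ = z₂ := by
  induction x₁ generalizing x₂ with
  | nil =>
    cases x₂ with
    | nil => simpa using h
    | cons y x₂ =>
      simp only [nil_append, cons_append, cons.injEq] at h
      exact absurd (h.1 ▸ ha₁) (hx₂ y mem_cons_self)
  | cons y x₁ ih =>
    cases x₂ with
    | nil =>
      simp only [nil_append, cons_append, cons.injEq] at h
      exact absurd (h.1 ▸ ha₂) (hx₁ y mem_cons_self)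
    | cons y' x₂ =>
      simp only [cons_append, cons.injEq] at h
      obtain ⟨rfl, h⟩ := h
      obtain ⟨rfl, rfl, rfl⟩ := ih (fun w hw => hx₁ w (mem_cons_of_mem y hw))
        (fun w hw => hx₂ w (mem_cons_of_mem y hw)) h
      exact ⟨rfl, rfl, rfl⟩

theorem take_append_take_drop_append_drop {α : Type*} (b c : ℕ) (l : List α) :
    l.take b ++ (l.drop b).take c ++ l.drop (b + c) = l := by
  rw [append_assoc, ← drop_drop, take_append_drop, take_append_drop]

end List

universe u v

/-- `X n a + (a+1) · ∑_{j > a} X n j`, encoded as pairs `(b, x)` with `b ≤ a` and `x : X n j`,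
`a ≤ j`, where `b = 0` when `j = a`. -/
def RecursionData (X : ℕ → ℕ → Type u) (n a : ℕ) : Type u :=
  {p : Fin (a + 1) × (j : {j : ℕ // a ≤ j}) × X n j // p.2.1.1 = a → p.1 = 0}

def RecursionData.congr {X : ℕ → ℕ → Type u} {Y : ℕ → ℕ → Type v} {n : ℕ}
    (e : ∀ j, X n j ≃ Y n j) (a : ℕ) : RecursionData X n a ≃ RecursionData Y n a :=
  Equiv.subtypeEquiv ((Equiv.refl _).prodCongr (Equiv.sigmaCongrRight fun j => e j.1))
    fun _ => Iff.rfl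

structure RecursiveFamily (X : ℕ → ℕ → Type u) where
  unique_zero_zero : Unique (X 0 0)
  isEmpty_zero_succ : ∀ k, IsEmpty (X 0 (k + 1))
  isEmpty_succ_zero : ∀ n, IsEmpty (X (n + 1) 0)
  step : ∀ n a, X (n + 1) (a + 1) ≃ RecursionData X n a

def RecursiveFamily.equiv {X : ℕ → ℕ → Type u} {Y : ℕ → ℕ → Type v}
    (hX : RecursiveFamily X) (hY : RecursiveFamily Y) : ∀ n k, X n k ≃ Y n k
  | 0, 0 => @Equiv.ofUnique _ _ hX.unique_zero_zero hY.unique_zero_zero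
  | 0, k + 1 => @Equiv.equivOfIsEmpty _ _ (hX.isEmpty_zero_succ k) (hY.isEmpty_zero_succ k)
  | n + 1, 0 => @Equiv.equivOfIsEmpty _ _ (hX.isEmpty_succ_zero n) (hY.isEmpty_succ_zero n)
  | n + 1, a + 1 =>
    (hX.step n a).trans ((RecursionData.congr (hX.equiv hY n) a).trans (hY.step n a).symm)

section DyckPath

open List

theorem count_take_append_peak (u r : List Bool) (t : ℕ) (b : Bool) :
    ((u ++ true :: false :: r).take (u.length + (t + 2))).count b =
      ((u ++ r).take (u.length + t)).count b + 1 := by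
  rw [take_length_add_append, take_length_add_append]
  cases b <;> simp <;> omega

theorem isDyckPath_append_peak_iff {n : ℕ} (u r : List Bool) :
    IsDyckPath (n + 1) (u ++ true :: false :: r) ↔ IsDyckPath n (u ++ r) := by
  have hprefix (l : List Bool) (i : ℕ) (hi : i ≤ u.length) : (u ++ l).take i = u.take i :=
    take_append_of_le_length hi
  unfold IsDyckPath
  constructor
  · rintro ⟨hl, hpre, hc⟩
    refine ⟨by simp at hl ⊢; omega, fun i => ?_, by simp at hc ⊢; omega⟩
    rcases le_or_gt i u.length with hi | hi
    · simpa only [hprefix _ i hi] using hpre i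
    · obtain ⟨t, rfl⟩ := Nat.exists_eq_add_of_le hi.le
      have := hpre (u.length + (t + 2))
      rw [count_take_append_peak, count_take_append_peak] at this
      omega
  · rintro ⟨hl, hpre, hc⟩
    refine ⟨by simp at hl ⊢; omega, fun i => ?_, by simp at hc ⊢; omega⟩
    rcases le_or_gt i u.length with hi | hi
    · simpa only [hprefix _ i hi] using hpre i
    obtain ⟨_ | t, rfl⟩ := Nat.exists_eq_add_of_lt hi
    · have := hpre u.length
      rw [hprefix _ _ le_rfl, take_length] at this
      rw [add_assoc, take_length_add_append]
      simp
      omega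
    · have := hpre (u.length + t)
      rw [show u.length + (t + 1) + 1 = u.length + (t + 2) by omega,
        count_take_append_peak, count_take_append_peak]
      omega

theorem pathHeight_append_peak (u r : List Bool) (t : ℕ) :
    pathHeight (u ++ true :: false :: r) (u.length + (t + 2)) =
      pathHeight (u ++ r) (u.length + t) := by
  simp only [pathHeight, count_take_append_peak]
  omega

theorem isValley_append_peak_iff (u r : List Bool) (t : ℕ) :
    IsValley (u ++ true :: false :: r) (u.length + (t + 2)) ↔
      IsValley (u ++ r) (u.length + t) := by
  simp [IsValley, getElem?_append_right, Nat.add_assoc]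

theorem not_isValley_append_peak (u r : List Bool) :
    ¬ IsValley (u ++ true :: false :: r) u.length := by
  simp [IsValley]

theorem isValley_append_peak_succ_iff (u r : List Bool) :
    IsValley (u ++ true :: false :: r) (u.length + 1) ↔ r.head? = some true := by
  simp [IsValley, getElem?_append_right, Nat.add_assoc, head?_eq_getElem?]

theorem not_isValley_replicate_append {a i : ℕ} (s : List Bool) (hi : i < a) :
    ¬ IsValley (replicate a true ++ s) i := by
  simp [IsValley, getElem?_append_left, hi]

theorem pathHeight_replicate_append (a : ℕ) (s : List Bool) :
    pathHeight (replicate a true ++ s) a = a := by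
  simp [pathHeight, count_replicate]

/-- Marks of a path with a peak `UD` inserted after the first `a` steps: the marks `m` of the
original valleys move two places to the right and the new valley (if any) gets the mark `b`. -/
def insertMarks (a b : ℕ) (m : ℕ → ℕ) (i : ℕ) : ℕ :=
  if i < a then m i else if i = a then 0 else if i = a + 1 then b else m (i - 2)

def removeMarks (a : ℕ) (m : ℕ → ℕ) (i : ℕ) : ℕ :=
  if i < a then m i else m (i + 2)

def IsValleyMarkingAt (p : List Bool) (m : ℕ → ℕ) (i : ℕ) : Prop :=
  (IsValley p i → m i ≤ pathHeight p (i + 1)) ∧ (¬ IsValley p i → m i = 0)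

section InsertMarks

variable {a b : ℕ} {m : ℕ → ℕ} {s : List Bool}

theorem insertMarks_of_lt {i : ℕ} (hi : i < a) : insertMarks a b m i = m i := if_pos hi

@[simp] theorem insertMarks_self : insertMarks a b m a = 0 := by simp [insertMarks]

@[simp] theorem insertMarks_succ : insertMarks a b m (a + 1) = b := by simp [insertMarks]

@[simp] theorem insertMarks_add_two (t : ℕ) : insertMarks a b m (a + (t + 2)) = m (a + t) := by
  simp [insertMarks, show ¬ a + (t + 2) < a by omega, show a + (t + 2) - 2 = a + t by omega]

theorem removeMarks_insertMarks : removeMarks a (insertMarks a b m) = m := by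
  funext i
  simp only [removeMarks, insertMarks]
  split_ifs <;> first | rfl | omega

theorem insertMarks_removeMarks (h : m a = 0) :
    insertMarks a (m (a + 1)) (removeMarks a m) = m := by
  funext i
  simp only [removeMarks, insertMarks]
  split_ifs <;> first | rfl | omega | (subst_vars; simp [h]) | (congr 1; omega)

theorem isValleyMarkingAt_insertMarks_of_lt_iff {i : ℕ} (hi : i < a) :
    IsValleyMarkingAt (replicate a true ++ true :: false :: s) (insertMarks a b m) i ↔
      IsValleyMarkingAt (replicate a true ++ s) m i := by
  simp [IsValleyMarkingAt, insertMarks_of_lt hi, not_isValley_replicate_append _ hi]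

theorem isValleyMarkingAt_insertMarks_self :
    IsValleyMarkingAt (replicate a true ++ true :: false :: s) (insertMarks a b m) a := by
  have := not_isValley_append_peak (replicate a true) s
  simp_all [IsValleyMarkingAt]

theorem isValleyMarkingAt_insertMarks_succ_iff :
    IsValleyMarkingAt (replicate a true ++ true :: false :: s) (insertMarks a b m) (a + 1) ↔
      b ≤ a ∧ (s.head? = some true ∨ b = 0) := by
  have hvalley := isValley_append_peak_succ_iff (replicate a true) s
  have hheight := pathHeight_append_peak (replicate a true) s 0
  simp only [length_replicate, add_zero, pathHeight_replicate_append] at hvalley hheight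
  by_cases hs : s.head? = some true
  · simp [IsValleyMarkingAt, hvalley, hheight, hs]
  · simp [IsValleyMarkingAt, hvalley, hs]
    omega

theorem isValleyMarkingAt_insertMarks_add_two_iff (t : ℕ) :
    IsValleyMarkingAt (replicate a true ++ true :: false :: s) (insertMarks a b m) (a + (t + 2)) ↔
      IsValleyMarkingAt (replicate a true ++ s) m (a + t) := by
  have hvalley := isValley_append_peak_iff (replicate a true) s t
  have hheight := pathHeight_append_peak (replicate a true) s (t + 1)
  simp only [length_replicate] at hvalley hheight
  simp [IsValleyMarkingAt, hvalley, show a + (t + 2) + 1 = a + (t + 1 + 2) by omega, hheight,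
    add_assoc]

theorem isValleyMarking_insertMarks_iff :
    IsValleyMarking (replicate a true ++ true :: false :: s) (insertMarks a b m) ↔
      IsValleyMarking (replicate a true ++ s) m ∧ b ≤ a ∧ (s.head? = some true ∨ b = 0) := by
  change (∀ i, IsValleyMarkingAt _ _ i) ↔ (∀ i, IsValleyMarkingAt _ _ i) ∧ _
  constructor
  · intro h
    refine ⟨fun i => ?_, isValleyMarkingAt_insertMarks_succ_iff.1 (h (a + 1))⟩
    rcases lt_or_ge i a with hi | hi
    · exact (isValleyMarkingAt_insertMarks_of_lt_iff hi).1 (h i)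
    · obtain ⟨t, rfl⟩ := Nat.exists_eq_add_of_le hi
      exact (isValleyMarkingAt_insertMarks_add_two_iff t).1 (h _)
  · rintro ⟨hm, hb⟩ i
    rcases lt_trichotomy i a with hi | rfl | hi
    · exact (isValleyMarkingAt_insertMarks_of_lt_iff hi).2 (hm i)
    · exact isValleyMarkingAt_insertMarks_self
    · obtain ⟨_ | t, rfl⟩ := Nat.exists_eq_add_of_lt hi
      · exact isValleyMarkingAt_insertMarks_succ_iff.2 hb
      · rw [show a + (t + 1) + 1 = a + (t + 2) by omega]
        exact (isValleyMarkingAt_insertMarks_add_two_iff t).2 (hm _)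

end InsertMarks

theorem firstAscentLength_replicate_append (a : ℕ) (s : List Bool) :
    firstAscentLength (replicate a true ++ s) = a + firstAscentLength s := by
  simp [firstAscentLength]

theorem firstAscentLength_pos_iff (s : List Bool) :
    0 < firstAscentLength s ↔ s.head? = some true := by
  rcases s with _ | ⟨_ | _, s⟩ <;> simp [firstAscentLength]

theorem takeWhile_id_eq_replicate (p : List Bool) :
    p.takeWhile id = replicate (firstAscentLength p) true :=
  eq_replicate_iff.2 ⟨rfl, fun b hb => by simpa using mem_takeWhile_imp hb⟩

theorem eq_replicate_append_drop {a : ℕ} {p : List Bool} (h : a ≤ firstAscentLength p) :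
    p = replicate a true ++ p.drop a := by
  have htake : p.take a = replicate a true := by
    conv_lhs => rw [← takeWhile_append_dropWhile (p := id) (l := p)]
    rw [take_append_of_le_length (by simpa [takeWhile_id_eq_replicate] using h),
      takeWhile_id_eq_replicate, take_replicate, min_eq_left h]
  rw [← htake, take_append_drop]

theorem exists_eq_replicate_append_peak {n a : ℕ} {p : List Bool} (hp : IsDyckPath n p)
    (h : firstAscentLength p = a + 1) : ∃ s, p = replicate a true ++ true :: false :: s := by
  have hp' := eq_replicate_append_drop h.ge
  have hfirst : firstAscentLength (p.drop (a + 1)) = 0 := by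
    have := firstAscentLength_replicate_append (a + 1) (p.drop (a + 1))
    rw [← hp'] at this
    omega
  rcases hdrop : p.drop (a + 1) with _ | ⟨x, s⟩
  · have hcount := hp.2.2
    rw [hp', hdrop] at hcount
    simp [count_replicate] at hcount
  · obtain rfl : x = false := by
      rw [hdrop] at hfirst
      cases x
      · rfl
      · simp [firstAscentLength] at hfirst
    refine ⟨s, ?_⟩
    rw [hp', hdrop, replicate_succ', append_assoc, singleton_append]

theorem eq_nil_of_isDyckPath_zero {p : List Bool} (hp : IsDyckPath 0 p) : p = [] :=
  length_eq_zero_iff.1 hp.1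

theorem head?_eq_of_isDyckPath_succ {n : ℕ} {p : List Bool} (hp : IsDyckPath (n + 1) p) :
    p.head? = some true := by
  rcases p with _ | ⟨_ | _, p⟩
  · simpa using hp.1
  · simpa using hp.2.1 1
  · rfl

abbrev ValleyMarkedPath (n k : ℕ) : Type :=
  {pm : List Bool × (ℕ → ℕ) //
    IsDyckPath n pm.1 ∧ IsValleyMarking pm.1 pm.2 ∧ firstAscentLength pm.1 = k}

namespace ValleyMarkedPath

theorem insertPeak_spec {n a j b : ℕ} {p : List Bool} {m : ℕ → ℕ}
    (hq : IsDyckPath n p ∧ IsValleyMarking p m ∧ firstAscentLength p = j) (ha : a ≤ j)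
    (hb : b ≤ a) (hb0 : j = a → b = 0) :
    IsDyckPath (n + 1) (replicate a true ++ true :: false :: p.drop a) ∧
      IsValleyMarking (replicate a true ++ true :: false :: p.drop a) (insertMarks a b m) ∧
      firstAscentLength (replicate a true ++ true :: false :: p.drop a) = a + 1 := by
  obtain ⟨hd, hm, rfl⟩ := hq
  have hp := eq_replicate_append_drop ha
  set s := p.drop a
  rw [hp] at hd hm
  refine ⟨(isDyckPath_append_peak_iff _ _).2 hd, isValleyMarking_insertMarks_iff.2 ⟨hm, hb, ?_⟩,
    by simp [firstAscentLength]⟩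
  by_cases hs : s.head? = some true
  · exact Or.inl hs
  · have hs0 : firstAscentLength s = 0 := by
      rwa [← Nat.le_zero, ← not_lt, firstAscentLength_pos_iff]
    exact Or.inr (hb0 (by rw [hp, firstAscentLength_replicate_append, hs0, add_zero]))

def insertPeak {n a : ℕ} : RecursionData ValleyMarkedPath n a → ValleyMarkedPath (n + 1) (a + 1)
  | ⟨(b, ⟨⟨_, ha⟩, ⟨(p, m), hq⟩⟩), hb0⟩ =>
    ⟨(replicate a true ++ true :: false :: p.drop a, insertMarks a b m),
      insertPeak_spec hq ha (Nat.le_of_lt_succ b.2) fun h => Fin.val_eq_zero_iff.2 (hb0 h)⟩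

theorem insertPeak_injective (n a : ℕ) : Function.Injective (@insertPeak n a) := by
  rintro ⟨⟨b, ⟨j, ha⟩, ⟨p, m⟩, hq⟩, hb0⟩ ⟨⟨b', ⟨j', ha'⟩, ⟨p', m'⟩, hq'⟩, hb0'⟩ h
  obtain rfl := hq.2.2
  obtain rfl := hq'.2.2
  dsimp only at ha ha'
  simp only [insertPeak, Subtype.mk.injEq, Prod.mk.injEq, append_cancel_left_eq, cons.injEq,
    true_and] at h
  obtain ⟨hdrop, hmarks⟩ := h
  obtain rfl : p = p' := by
    rw [eq_replicate_append_drop ha, eq_replicate_append_drop ha', hdrop]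
  obtain rfl : m = m' := by
    rw [← removeMarks_insertMarks (a := a) (b := b) (m := m), hmarks, removeMarks_insertMarks]
  obtain rfl : b = b' := Fin.ext (by simpa using congrFun hmarks (a + 1))
  rfl

theorem insertPeak_surjective (n a : ℕ) : Function.Surjective (@insertPeak n a) := by
  rintro ⟨⟨P, M⟩, hd, hM, hf⟩
  obtain ⟨s, rfl⟩ := exists_eq_replicate_append_peak hd hf
  have hMa : M a = 0 := by
    simpa using (hM a).2 (by simpa using not_isValley_append_peak (replicate a true) s)
  rw [← insertMarks_removeMarks hMa] at hM
  obtain ⟨hm, hb, hb0⟩ := isValleyMarking_insertMarks_iff.1 hM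
  refine ⟨⟨(⟨M (a + 1), Nat.lt_succ_of_le hb⟩, ⟨⟨a + firstAscentLength s, Nat.le_add_right _ _⟩,
    ⟨(replicate a true ++ s, removeMarks a M), (isDyckPath_append_peak_iff _ _).1 hd, hm,
      firstAscentLength_replicate_append a s⟩⟩), fun hj => ?_⟩, ?_⟩
  · refine Fin.ext (hb0.resolve_left ?_)
    rw [← firstAscentLength_pos_iff]
    simp at hj
    omega
  · simp [insertPeak, insertMarks_removeMarks hMa]

instance : Unique (ValleyMarkedPath 0 0) where
  default := ⟨([], fun _ => 0), ⟨by simp [IsDyckPath], fun _ => by simp [IsValley],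
    by simp [firstAscentLength]⟩⟩
  uniq := by
    rintro ⟨⟨p, m⟩, hd, hm, -⟩
    obtain rfl := eq_nil_of_isDyckPath_zero hd
    obtain rfl : m = fun _ => 0 := funext fun i => (hm i).2 (by simp [IsValley])
    rfl

instance (k : ℕ) : IsEmpty (ValleyMarkedPath 0 (k + 1)) where
  false := by
    rintro ⟨⟨p, m⟩, hd, -, hf⟩
    obtain rfl := eq_nil_of_isDyckPath_zero hd
    simp [firstAscentLength] at hf

instance (n : ℕ) : IsEmpty (ValleyMarkedPath (n + 1) 0) where
  false := by
    rintro ⟨⟨p, m⟩, hd, -, hf⟩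
    exact ((firstAscentLength_pos_iff p).2 (head?_eq_of_isDyckPath_succ hd)).ne' hf

noncomputable def recursiveFamily : RecursiveFamily ValleyMarkedPath where
  unique_zero_zero := inferInstance
  isEmpty_zero_succ _ := inferInstance
  isEmpty_succ_zero _ := inferInstance
  step n a := (Equiv.ofBijective _ ⟨insertPeak_injective n a, insertPeak_surjective n a⟩).symm

end ValleyMarkedPath

end DyckPath

namespace OTree

open List

@[elab_as_elim]
theorem ind {motive : OTree → Prop}
    (node : ∀ l ts, (∀ t ∈ ts, motive t) → motive (.node l ts)) (t : OTree) : motive t :=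
  OTree.rec (motive_1 := motive) (motive_2 := fun ts => ∀ t ∈ ts, motive t)
    (fun l ts ih => node l ts ih) (by simp) (fun _ _ ht hts => forall_mem_cons.2 ⟨ht, hts⟩) t

def map (f : ℕ → ℕ) : OTree → OTree
  | .node l ts => .node (f l) (ts.attach.map fun t => map f t.1)
decreasing_by
  have := List.sizeOf_lt_of_mem t.2
  simp only [OTree.node.sizeOf_spec]
  omega

section Basic

variable {f g : ℕ → ℕ} {l x : ℕ} {ts : List OTree} {t u : OTree}

@[simp] theorem label_node : (node l ts).label = l := rfl

@[simp] theorem children_node : (node l ts).children = ts := rfl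

theorem eq_node (t : OTree) : t = node t.label t.children := by
  cases t; rfl

theorem eq_node_zero (h : t.label = 0) : t = node 0 t.children := by
  cases t; simp_all

@[simp] theorem preorder_node : (node l ts).preorder = l :: (ts.map preorder).flatten := by
  rw [preorder, attach_map_val]

theorem leaves_node : (node l ts).leaves = if ts = [] then [l] else (ts.map leaves).flatten := by
  rw [leaves, attach_map_val]
  simp only [List.isEmpty_iff]

@[simp] theorem map_node : (node l ts).map f = node (f l) (ts.map (map f)) := by
  rw [map, attach_map_val]

@[simp] theorem label_map : (t.map f).label = f t.label := by
  cases t; simp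

theorem label_mem_preorder (t : OTree) : t.label ∈ t.preorder := by
  cases t; simp

theorem mem_preorder_of_mem_children (hu : u ∈ ts) (hx : x ∈ u.preorder) :
    x ∈ (node l ts).preorder := by
  rw [preorder_node]
  exact mem_cons_of_mem _ (mem_flatten.2 ⟨_, mem_map_of_mem hu, hx⟩)

theorem preorder_map (t : OTree) : (t.map f).preorder = t.preorder.map f := by
  induction t using OTree.ind with
  | node l ts ih =>
    simp only [map_node, preorder_node, List.map_cons, map_flatten, List.map_map]
    exact congrArg _ (congrArg _ (map_congr_left ih))

theorem leaves_map (t : OTree) : (t.map f).leaves = t.leaves.map f := by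
  induction t using OTree.ind with
  | node l ts ih =>
    by_cases h : ts = []
    · simp [leaves_node, h]
    · simp only [map_node, leaves_node, List.map_eq_nil_iff, h, if_false, map_flatten,
        List.map_map]
      exact congrArg _ (map_congr_left ih)

theorem map_map (t : OTree) : (t.map g).map f = t.map (f ∘ g) := by
  induction t using OTree.ind with
  | node l ts ih =>
    simp only [map_node, List.map_map, node.injEq]
    exact ⟨rfl, map_congr_left ih⟩

theorem map_eq_self (h : ∀ x ∈ t.preorder, f x = x) : t.map f = t := by
  induction t using OTree.ind with
  | node l ts ih =>
    simp only [map_node, h l (label_mem_preorder (node l ts)), node.injEq, true_and]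
    exact (map_congr_left fun u hu =>
      ih u hu fun x hx => h x (mem_preorder_of_mem_children hu hx)).trans (map_id ts)

theorem map_pred_map_succ (t : OTree) : (t.map (· + 1)).map (· - 1) = t := by
  rw [map_map]
  exact map_eq_self fun x _ => Nat.add_sub_cancel x 1

theorem map_succ_map_pred (h : ∀ x ∈ t.preorder, 0 < x) : (t.map (· - 1)).map (· + 1) = t := by
  rw [map_map]
  exact map_eq_self fun x hx => Nat.sub_add_cancel (h x hx)

theorem map_succ_injective : Function.Injective (List.map (map (· + 1))) :=
  map_injective_iff.2 (Function.LeftInverse.injective map_pred_map_succ)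

theorem map_map_succ_map_pred {L : List OTree} (h : ∀ t ∈ L, ∀ x ∈ t.preorder, 0 < x) :
    (L.map (map (· - 1))).map (map (· + 1)) = L := by
  rw [List.map_map]
  exact (map_congr_left fun t ht => map_succ_map_pred (h t ht)).trans (map_id L)

theorem leaves_ne_nil (t : OTree) : t.leaves ≠ [] := by
  induction t using OTree.ind with
  | node l ts ih =>
    rw [leaves_node]
    split_ifs with h
    · simp
    · obtain ⟨t, ht⟩ := exists_mem_of_ne_nil ts h
      simpa [flatten_eq_nil_iff] using ⟨t, ht, ih t ht⟩

theorem mem_preorder_of_mem_leaves (hx : x ∈ t.leaves) : x ∈ t.preorder := by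
  induction t using OTree.ind with
  | node l ts ih =>
    rw [leaves_node] at hx
    split_ifs at hx
    · simp_all
    · obtain ⟨_, ⟨u, hu, rfl⟩, hxu⟩ := by simpa only [mem_flatten, mem_map] using hx
      exact mem_preorder_of_mem_children hu (ih u hu hxu)

theorem flatten_map_leaves_map (f : ℕ → ℕ) (L : List OTree) :
    ((L.map (map f)).map leaves).flatten = ((L.map leaves).flatten).map f := by
  simp [map_flatten, leaves_map, Function.comp_def]

theorem length_children_lt_length_preorder (t : OTree) :
    t.children.length < t.preorder.length := by
  obtain ⟨l, ts⟩ := t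
  suffices ts.length ≤ (ts.map preorder).flatten.length by simpa [Nat.lt_succ_iff] using this
  induction ts with
  | nil => simp
  | cons u ts ih =>
    have := length_pos_of_mem u.label_mem_preorder
    simp only [length_cons, List.map_cons, flatten_cons, length_append]
    omega

theorem increasing_node_iff : (node l ts).Increasing ↔ ∀ t ∈ ts, l < t.label ∧ t.Increasing :=
  ⟨fun ⟨_, _, hl, hts⟩ t ht => ⟨hl t ht, hts t ht⟩,
    fun h => .node l ts (fun t ht => (h t ht).1) fun t ht => (h t ht).2⟩

theorem Increasing.label_le (ht : t.Increasing) (hx : x ∈ t.preorder) : t.label ≤ x := by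
  induction t using OTree.ind with
  | node l ts ih =>
    rw [increasing_node_iff] at ht
    obtain rfl | ⟨_, ⟨u, hu, rfl⟩, hxu⟩ := by
      simpa only [preorder_node, mem_cons, mem_flatten, mem_map] using hx
    · exact le_rfl
    · exact (ht u hu).1.le.trans (ih u hu (ht u hu).2 hxu)

theorem increasing_map_iff (hf : StrictMono f) : (t.map f).Increasing ↔ t.Increasing := by
  induction t using OTree.ind with
  | node l ts ih =>
    simp only [map_node, increasing_node_iff, forall_mem_map, label_map, hf.lt_iff_lt]
    exact forall₂_congr fun t ht => and_congr_right' (ih t ht)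

theorem increasing_map_succ_iff : (t.map (· + 1)).Increasing ↔ t.Increasing :=
  increasing_map_iff fun _ _ => Nat.succ_lt_succ

theorem hasIncLeaves_node_iff :
    HasIncLeaves (node l ts) ↔ (ts.map leaves).flatten.Pairwise (· < ·) := by
  rw [HasIncLeaves, leaves_node]
  split_ifs with h <;> simp [h]

theorem pos_of_perm_range {m : ℕ} (h : (node 0 ts).preorder.Perm (range m)) (hu : u ∈ ts)
    (hx : x ∈ u.preorder) : 0 < x := by
  have hnodup := h.nodup_iff.2 nodup_range
  rw [preorder_node, nodup_cons] at hnodup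
  exact Nat.pos_of_ne_zero fun hx0 => hnodup.1 (mem_flatten.2 ⟨_, mem_map_of_mem hu, hx0 ▸ hx⟩)

end Basic

section Graft

variable {n : ℕ} {A D B : List OTree}

/-- The inverse of contracting the vertex `1` into the root: the labels of `node 0 (A ++ D ++ B)`
are shifted up by one and the subtrees `D` are gathered under a new root child labelled `1`. -/
def graft (A D B : List OTree) : OTree :=
  node 0 (A.map (map (· + 1)) ++ node 1 (D.map (map (· + 1))) :: B.map (map (· + 1)))

theorem perm_range_add_two_iff {L : List ℕ} :
    (0 :: 1 :: L.map (· + 1)).Perm (range (n + 2)) ↔ (0 :: L).Perm (range (n + 1)) := by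
  rw [range_succ_eq_map (n := n + 1), perm_cons,
    show 1 :: L.map (· + 1) = (0 :: L).map Nat.succ from rfl, map_perm_map_iff Nat.succ_injective]

theorem preorder_graft_perm (A D B : List OTree) :
    (graft A D B).preorder.Perm (0 :: 1 :: ((A ++ D ++ B).map preorder).flatten.map (· + 1)) := by
  simp only [graft, preorder_node, List.map_append, flatten_append, List.map_cons, flatten_cons,
    List.map_map, Function.comp_def, preorder_map, map_flatten]
  exact .cons 0 (by simp)

theorem isIncOrdTree_graft_iff :
    IsIncOrdTree (n + 1) (graft A D B) ↔ IsIncOrdTree n (node 0 (A ++ D ++ B)) := by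
  have hperm : (graft A D B).preorder.Perm (range (n + 2)) ↔
      (node 0 (A ++ D ++ B)).preorder.Perm (range (n + 1)) := by
    rw [(preorder_graft_perm A D B).congr_left, perm_range_add_two_iff, preorder_node]
  have hinc (hpos : ∀ t ∈ A ++ D ++ B, 0 < t.label) :
      (graft A D B).Increasing ↔ (node 0 (A ++ D ++ B)).Increasing := by
    simp only [mem_append, or_imp, forall_and] at hpos
    simp only [graft, increasing_node_iff, mem_append, mem_cons, forall_mem_map, or_imp,
      forall_and, forall_eq, label_map, label_node, increasing_map_succ_iff, Nat.zero_lt_succ,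
      Nat.lt_add_left_iff_pos, implies_true, true_and]
    tauto
  unfold IsIncOrdTree
  constructor
  · rintro ⟨-, hp, hi⟩
    have hp' := hperm.1 hp
    exact ⟨rfl, hp', (hinc fun t ht => pos_of_perm_range hp' ht (label_mem_preorder t)).1 hi⟩
  · rintro ⟨-, hp, hi⟩
    exact ⟨rfl, hperm.2 hp, (hinc fun t ht => pos_of_perm_range hp ht (label_mem_preorder t)).2 hi⟩

theorem hasIncLeaves_graft_iff (hB : ∀ t ∈ B, ∀ x ∈ t.leaves, 0 < x) :
    HasIncLeaves (graft A D B) ↔ HasIncLeaves (node 0 (A ++ D ++ B)) ∧ (D = [] → A = []) := by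
  rw [graft, hasIncLeaves_node_iff, hasIncLeaves_node_iff]
  simp only [List.map_append, List.map_cons, flatten_append, flatten_cons, flatten_map_leaves_map]
  rcases eq_or_ne D [] with rfl | hD
  · simp only [List.map_nil, leaves_node, if_true, flatten_nil, List.append_nil, singleton_append,
      forall_const]
    rcases eq_or_ne A [] with rfl | hA
    · simp only [List.map_nil, flatten_nil, List.nil_append, pairwise_cons, pairwise_map,
        Nat.add_lt_add_iff_right, forall_mem_map, and_true]
      refine and_iff_right fun x hx => Nat.succ_lt_succ ?_
      obtain ⟨_, ⟨t, ht, rfl⟩, hxt⟩ := by simpa only [mem_flatten, mem_map] using hx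
      exact hB t ht x hxt
    · simp only [hA, and_false, iff_false]
      intro h
      obtain ⟨t, ht⟩ := exists_mem_of_ne_nil A hA
      obtain ⟨x, hx⟩ := exists_mem_of_ne_nil _ (leaves_ne_nil t)
      have := (pairwise_append.1 h).2.2 (x + 1)
        (mem_map_of_mem (mem_flatten.2 ⟨_, mem_map_of_mem ht, hx⟩)) 1 mem_cons_self
      omega
  · rw [leaves_node, if_neg (by simpa using hD), flatten_map_leaves_map, ← List.map_append,
      ← List.map_append, pairwise_map]
    simp [hD]

theorem eq_of_graft_eq {A' D' B' : List OTree} (hA : ∀ t ∈ A, 0 < t.label)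
    (hA' : ∀ t ∈ A', 0 < t.label) (h : graft A D B = graft A' D' B') :
    A = A' ∧ D = D' ∧ B = B' := by
  have hshift {A : List OTree} (hA : ∀ t ∈ A, 0 < t.label) :
      ∀ u ∈ A.map (map (· + 1)), ¬ u.label = 1 := by
    simpa only [forall_mem_map, label_map, Nat.add_eq_right] using fun t ht => (hA t ht).ne'
  simp only [graft, node.injEq, true_and] at h
  obtain ⟨hA, hD, hB⟩ := eq_of_append_cons_eq_append_cons (hshift hA) (hshift hA') rfl rfl h
  exact ⟨map_succ_injective hA, map_succ_injective (node.inj hD).2, map_succ_injective hB⟩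

theorem exists_eq_graft {t : OTree} (h : IsIncOrdTree (n + 1) t) : ∃ A D B, t = graft A D B := by
  obtain ⟨hl, hp, hi⟩ := h
  rw [eq_node_zero hl] at hp hi ⊢
  have hpos {u : OTree} (hu : u ∈ t.children) {x : ℕ} (hx : x ∈ u.preorder) : 0 < x :=
    pos_of_perm_range hp hu hx
  obtain ⟨c, hc, h1c⟩ : ∃ c ∈ t.children, 1 ∈ c.preorder := by
    simpa using hp.mem_iff.2 (mem_range.2 (by omega : 1 < n + 2))
  have hcl : c.label = 1 :=
    le_antisymm ((increasing_node_iff.1 hi c hc).2.label_le h1c) (hpos hc c.label_mem_preorder)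
  obtain ⟨A, B, hAB⟩ := append_of_mem hc
  refine ⟨A.map (map (· - 1)), c.children.map (map (· - 1)), B.map (map (· - 1)), ?_⟩
  rw [graft, map_map_succ_map_pred, map_map_succ_map_pred, map_map_succ_map_pred, hAB, ← hcl,
    ← eq_node]
  · exact fun u hu x hx => hpos (hAB ▸ mem_append_right _ (mem_cons_of_mem _ hu)) hx
  · exact fun u hu x hx => hpos hc (eq_node c ▸ mem_preorder_of_mem_children hu hx)
  · exact fun u hu x hx => hpos (hAB ▸ mem_append_left _ hu) hx

def graftAt (b c : ℕ) (es : List OTree) : OTree :=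
  graft (es.take b) ((es.drop b).take c) (es.drop (b + c))

end Graft

end OTree

abbrev IncTree (n k : ℕ) : Type :=
  {t : OTree // IsIncOrdTree n t ∧ HasIncLeaves t ∧ t.children.length = k}

namespace IncTree

open OTree List

theorem graftAt_spec {n a j b : ℕ} {y : OTree}
    (hy : IsIncOrdTree n y ∧ HasIncLeaves y ∧ y.children.length = j) (ha : a ≤ j)
    (hb : b ≤ a) (hb0 : j = a → b = 0) :
    IsIncOrdTree (n + 1) (graftAt b (j - a) y.children) ∧
      HasIncLeaves (graftAt b (j - a) y.children) ∧
      (graftAt b (j - a) y.children).children.length = a + 1 := by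
  obtain ⟨hio, hlv, rfl⟩ := hy
  obtain ⟨l, es⟩ := y
  obtain rfl : l = 0 := hio.1
  simp only [children_node] at *
  rw [← take_append_take_drop_append_drop b (es.length - a) es] at hio hlv
  refine ⟨isIncOrdTree_graft_iff.2 hio, (hasIncLeaves_graft_iff fun t ht x hx =>
    pos_of_perm_range hio.2.1 (mem_append_right _ ht) (mem_preorder_of_mem_leaves hx)).2
      ⟨hlv, fun hD => ?_⟩, ?_⟩
  · have := congrArg length hD
    simp only [length_take, length_drop, length_nil] at this
    simp [hb0 (by omega)]
  · simp [graftAt, graft]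
    omega

def graft {n a : ℕ} : RecursionData IncTree n a → IncTree (n + 1) (a + 1)
  | ⟨(b, ⟨⟨j, ha⟩, ⟨y, hy⟩⟩), hb0⟩ =>
    ⟨graftAt b (j - a) y.children,
      graftAt_spec hy ha (Nat.le_of_lt_succ b.2) fun h => Fin.val_eq_zero_iff.2 (hb0 h)⟩

theorem graft_injective (n a : ℕ) : Function.Injective (@graft n a) := by
  rintro ⟨⟨b, ⟨j, ha⟩, y, hy⟩, hb0⟩ ⟨⟨b', ⟨j', ha'⟩, y', hy'⟩, hb0'⟩ h
  obtain rfl := hy.2.2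
  obtain rfl := hy'.2.2
  have hpos {y : OTree} (hy : IsIncOrdTree n y) {b : ℕ} : ∀ t ∈ y.children.take b, 0 < t.label :=
    fun t ht => pos_of_perm_range (eq_node_zero hy.1 ▸ hy.2.1) (mem_of_mem_take ht)
      t.label_mem_preorder
  simp only [graft, Subtype.mk.injEq, graftAt] at h
  obtain ⟨hA, hD, hB⟩ := eq_of_graft_eq (hpos hy.1) (hpos hy'.1) h
  have hes : y.children = y'.children := by
    rw [← take_append_take_drop_append_drop b (y.children.length - a) y.children, hA, hD, hB,
      take_append_take_drop_append_drop]
  obtain rfl : y = y' := by rw [eq_node_zero hy.1.1, eq_node_zero hy'.1.1, hes]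
  obtain rfl : b = b' := Fin.ext (by
    have := congrArg length hA
    simp only [length_take] at this
    omega)
  rfl

theorem graft_surjective (n a : ℕ) : Function.Surjective (@graft n a) := by
  rintro ⟨x, hio, hlv, hlen⟩
  obtain ⟨A, D, B, rfl⟩ := exists_eq_graft hio
  have hio' := isIncOrdTree_graft_iff.1 hio
  obtain ⟨hlv', hDA⟩ := (hasIncLeaves_graft_iff fun t ht x hx =>
    pos_of_perm_range hio'.2.1 (mem_append_right _ ht) (mem_preorder_of_mem_leaves hx)).1 hlv
  simp only [OTree.graft, children_node, length_append, List.length_map, length_cons] at hlen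
  refine ⟨⟨(⟨A.length, by omega⟩, ⟨⟨a + D.length, by omega⟩,
    ⟨node 0 (A ++ D ++ B), hio', hlv', by simp; omega⟩⟩), fun hj => ?_⟩, ?_⟩
  · have : D = [] := by simpa using hj
    simp [hDA this]
  · simp [graft, graftAt]

instance : Unique (IncTree 0 0) where
  default := ⟨node 0 [], ⟨rfl, by simp, .node 0 [] (by simp) (by simp)⟩,
    by simp [HasIncLeaves, leaves_node], rfl⟩
  uniq := by
    rintro ⟨t, hio, -, hlen⟩
    rw [Subtype.mk.injEq, eq_node_zero hio.1, length_eq_zero_iff.1 hlen]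

instance (k : ℕ) : IsEmpty (IncTree 0 (k + 1)) where
  false := by
    rintro ⟨t, hio, -, hlen⟩
    have := t.length_children_lt_length_preorder
    rw [hio.2.1.length_eq, hlen] at this
    simp at this

instance (n : ℕ) : IsEmpty (IncTree (n + 1) 0) where
  false := by
    rintro ⟨t, ⟨hl, hp, -⟩, -, hlen⟩
    rw [eq_node_zero hl, length_eq_zero_iff.1 hlen] at hp
    simpa using hp.length_eq

noncomputable def recursiveFamily : RecursiveFamily IncTree where
  unique_zero_zero := inferInstance
  isEmpty_zero_succ _ := inferInstance
  isEmpty_succ_zero _ := inferInstance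
  step n a := (Equiv.ofBijective _ ⟨graft_injective n a, graft_surjective n a⟩).symm

end IncTree

theorem stmt10_general (n k : ℕ) :
    Nat.card {pm : List Bool × (ℕ → ℕ) //
        IsDyckPath n pm.1 ∧ IsValleyMarking pm.1 pm.2 ∧
          firstAscentLength pm.1 = k}
      = Nat.card {t : OTree //
          IsIncOrdTree n t ∧ HasIncLeaves t ∧ t.children.length = k} :=
  Nat.card_congr (ValleyMarkedPath.recursiveFamily.equiv IncTree.recursiveFamily n k)

theorem stmt10 (n k : ℕ) (hn : 1 ≤ n) (hk : 1 ≤ k) (hkn : k ≤ n) :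
    Nat.card {pm : List Bool × (ℕ → ℕ) //
        IsDyckPath n pm.1 ∧ IsValleyMarking pm.1 pm.2 ∧
          firstAscentLength pm.1 = k}
      = Nat.card {t : OTree //
          IsIncOrdTree n t ∧ HasIncLeaves t ∧ t.children.length = k} :=
  stmt10_general n k
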